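/- There is a universal constant c > 0 such that for every n, every f : {−1,1}^n → [0,1], and every t > 0, setting s = −log(1 − e^{−t}), one has E_{Z∼μ_s}[ M(f_Z) ] ≥ c (e^{2t} − 1) Var(P_t f). -/

import Mathlib

open Real

/-- The `±1` value of a boolean coordinate. -/
noncomputable def bval (b : Bool) : ℝ := if b then 1 else -1

/-- Expectation with respect to the uniform measure on the discrete cube `{-1,1}^n`. -/
noncomputable def bExp (n : ℕ) (f : (Fin n → Bool) → ℝ) : ℝ :=
  (∑ x : Fin n → Bool, f x) / 2 ^ n

/-- Covariance on the discrete cube. -/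
noncomputable def bCov (n : ℕ) (f g : (Fin n → Bool) → ℝ) : ℝ :=
  bExp n (fun x => (f x - bExp n f) * (g x - bExp n g))

/-- Variance on the discrete cube. -/
noncomputable def bVar (n : ℕ) (f : (Fin n → Bool) → ℝ) : ℝ := bCov n f f

/-- The character `χ_S(x) = ∏_{i ∈ S} x_i`. -/
noncomputable def chi (n : ℕ) (S : Finset (Fin n)) (x : Fin n → Bool) : ℝ :=
  ∏ i ∈ S, bval (x i)

/-- The Fourier coefficient `f̂(S) = E[f χ_S]`. -/
noncomputable def fourierCoef (n : ℕ) (f : (Fin n → Bool) → ℝ) (S : Finset (Fin n)) : ℝ :=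
  bExp n (fun x => f x * chi n S x)

/-- The Bonami--Beckner semigroup `P_t f = Σ_S e^{-t|S|} f̂(S) χ_S`. -/
noncomputable def bP (n : ℕ) (t : ℝ) (f : (Fin n → Bool) → ℝ) : (Fin n → Bool) → ℝ :=
  fun x => ∑ S : Finset (Fin n), Real.exp (-t * S.card) * fourierCoef n f S * chi n S x

/-- A half-space `{x : ⟨a, x⟩ ≤ b}` in `{-1,1}^n`. -/
def IsHalfspaceB {n : ℕ} (A : Set (Fin n → Bool)) : Prop :=
  ∃ (a : Fin n → ℝ) (b : ℝ), A = {x | ∑ i, a i * bval (x i) ≤ b}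

/-- `M(g)`: the supremum over half-spaces `A` of `Cov(g, 1_A)`. -/
noncomputable def Mb (n : ℕ) (g : (Fin n → Bool) → ℝ) : ℝ :=
  ⨆ A : {A : Set (Fin n → Bool) // IsHalfspaceB A}, bCov n g (Set.indicator A.1 1)

/-- `z ⊘ x`: coordinates where `z` is `none` (i.e. 0) are filled in by `x`. -/
def oslash {n : ℕ} (z : Fin n → Option Bool) (x : Fin n → Bool) : Fin n → Bool :=
  fun i => (z i).getD (x i)

/-- The restriction `f_z(x) = f(z ⊘ x)`. -/
noncomputable def restrictF {n : ℕ} (f : (Fin n → Bool) → ℝ) (z : Fin n → Option Bool) :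
    (Fin n → Bool) → ℝ := fun x => f (oslash z x)

/-- The `μ_s`-probability of the restriction pattern `z ∈ {-1,0,1}^n`: each coordinate is
independently `0` (here `none`) with probability `e^{-s}`, and `±1` with probability
`(1-e^{-s})/2` each. -/
noncomputable def muWeight (n : ℕ) (s : ℝ) (z : Fin n → Option Bool) : ℝ :=
  ∏ i, if z i = none then Real.exp (-s) else (1 - Real.exp (-s)) / 2

/-- Expectation over a random restriction `Z ∼ μ_s`. -/
noncomputable def restExp (n : ℕ) (s : ℝ) (g : (Fin n → Option Bool) → ℝ) : ℝ :=
  ∑ z : Fin n → Option Bool, muWeight n s z * g z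

/-- `w₁(f) = Σ_i f̂({i})²`. -/
noncomputable def w1b (n : ℕ) (f : (Fin n → Bool) → ℝ) : ℝ :=
  ∑ i : Fin n, (fourierCoef n f {i}) ^ 2

/-- The boolean version of the ball example: `n = m²`, the coordinates are split into `m`
consecutive blocks `J_i = {j : j / m = i}` of size `m`, and
`B^{(m)} = {x : Σ_i (m^{-1/2} Σ_{j ∈ J_i} x_j)² ≤ m}`. -/
noncomputable def Bm (m : ℕ) : Set (Fin (m*m) → Bool) :=
  {x | ∑ i : Fin m,
    ((∑ j : Fin (m*m), if (j : ℕ) / m = (i : ℕ) then bval (x j) else 0) / Real.sqrt m) ^ 2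
      ≤ (m : ℝ)}

/-!
For `g` with values in `[0, 1]`, the linear form `L = Σ ĝ({i}) x_i` satisfies
`Cov(g, L) = E[L²] = w₁(g)`. Replacing `L` by a staircase truncation to `[-2, 2]` changes the
covariance by at most `E[L²] / 2 + 4 / N`, and the staircase is an average of indicators of the
half-spaces `{L ≥ τ}`; hence `w₁(g) ≤ 8 M(g)`. For a random restriction `Z ∼ μ_s` with
`e^{-s} = 1 - e^{-t}`, one computes `E[w₁(f_Z)] = Σ_S f̂(S)² |S| (1 - e^{-t}) e^{-t(|S| - 1)}`,
which dominates `(e^{2t} - 1) Σ_{S ≠ ∅} e^{-2t|S|} f̂(S)² / 2 = (e^{2t} - 1) Var(P_t f) / 2`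
term by term. So the theorem holds with `c = 1 / 16`.
-/

open Finset Filter Topology

section Cube

variable {n : ℕ}

lemma bExp_add (f g : (Fin n → Bool) → ℝ) :
    bExp n (fun x => f x + g x) = bExp n f + bExp n g := by
  simp only [bExp, sum_add_distrib, add_div]

lemma bExp_sub (f g : (Fin n → Bool) → ℝ) :
    bExp n (fun x => f x - g x) = bExp n f - bExp n g := by
  simp only [bExp, sum_sub_distrib, sub_div]

lemma bExp_const_mul (c : ℝ) (f : (Fin n → Bool) → ℝ) :
    bExp n (fun x => c * f x) = c * bExp n f := by
  simp only [bExp, ← mul_sum, mul_div_assoc]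

lemma bExp_const (c : ℝ) : bExp n (fun _ => c) = c := by
  simp [bExp]

lemma bExp_sum {ι : Type*} (s : Finset ι) (F : ι → (Fin n → Bool) → ℝ) :
    bExp n (fun x => ∑ k ∈ s, F k x) = ∑ k ∈ s, bExp n (F k) := by
  simp only [bExp, ← sum_div]
  rw [sum_comm]

lemma bExp_mono {f g : (Fin n → Bool) → ℝ} (h : ∀ x, f x ≤ g x) : bExp n f ≤ bExp n g :=
  div_le_div_of_nonneg_right (sum_le_sum fun x _ => h x) (by positivity)

lemma abs_bExp_le (f : (Fin n → Bool) → ℝ) : |bExp n f| ≤ bExp n (fun x => |f x|) := by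
  rw [bExp, bExp, abs_div, abs_of_pos (by positivity : (0 : ℝ) < 2 ^ n)]
  exact div_le_div_of_nonneg_right (abs_sum_le_sum_abs _ _) (by positivity)

lemma bExp_prod (g : Fin n → Bool → ℝ) :
    bExp n (fun x => ∏ i, g i (x i)) = ∏ i, (g i true + g i false) / 2 := by
  simp [bExp, ← Fintype.prod_sum, prod_div_distrib]

end Cube

section Fourier

variable {n : ℕ}

lemma chi_singleton (i : Fin n) (x : Fin n → Bool) : chi n {i} x = bval (x i) := by
  simp [chi]

lemma bExp_chi_mul_chi (S T : Finset (Fin n)) :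
    bExp n (fun x => chi n S x * chi n T x) = if S = T then 1 else 0 := by
  have hfactor : ∀ x, chi n S x * chi n T x =
      ∏ i, (if i ∈ S then bval (x i) else 1) * (if i ∈ T then bval (x i) else 1) := by
    intro x
    rw [prod_mul_distrib, Fintype.prod_ite_mem, Fintype.prod_ite_mem, chi, chi]
  have hcoord : ∀ i, ((if i ∈ S then bval true else 1) * (if i ∈ T then bval true else 1) +
      (if i ∈ S then bval false else 1) * (if i ∈ T then bval false else 1)) / 2 =
      if (i ∈ S ↔ i ∈ T) then 1 else 0 := by
    intro i
    by_cases hS : i ∈ S <;> by_cases hT : i ∈ T <;> norm_num [hS, hT, bval]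
  simp only [hfactor]
  rw [bExp_prod fun i b => (if i ∈ S then bval b else 1) * (if i ∈ T then bval b else 1)]
  simp only [hcoord, Fintype.prod_boole]
  split_ifs <;> simp_all [Finset.ext_iff]

lemma sum_chi_mul_chi (x y : Fin n → Bool) :
    ∑ S : Finset (Fin n), chi n S x * chi n S y = if x = y then (2 : ℝ) ^ n else 0 := by
  have hcoord : ∀ i, 1 + bval (x i) * bval (y i) = 2 * if x i = y i then 1 else 0 := by
    intro i
    cases x i <;> cases y i <;> norm_num [bval]
  simp only [chi, ← prod_mul_distrib]
  rw [← powerset_univ, ← prod_one_add]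
  simp only [hcoord, prod_mul_distrib, Fintype.prod_boole, prod_const, card_univ,
    Fintype.card_fin, funext_iff]
  split_ifs <;> simp

lemma sum_fourierCoef_mul_chi (f : (Fin n → Bool) → ℝ) (x : Fin n → Bool) :
    ∑ S : Finset (Fin n), fourierCoef n f S * chi n S x = f x := by
  have hcoef : ∀ S, fourierCoef n f S * chi n S x =
      bExp n (fun y => f y * (chi n S y * chi n S x)) := by
    intro S
    rw [fourierCoef, mul_comm, ← bExp_const_mul]
    simp only [mul_comm, mul_left_comm]
  simp only [hcoef, ← bExp_sum, ← mul_sum, sum_chi_mul_chi]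
  rw [bExp, sum_eq_single x (fun y _ hy => by simp [hy]) (by simp)]
  simp

lemma bExp_mul_eq_sum_fourierCoef_mul (f g : (Fin n → Bool) → ℝ) :
    bExp n (fun x => f x * g x) = ∑ S : Finset (Fin n), fourierCoef n f S * fourierCoef n g S := by
  have hexpand : (fun x => f x * g x) =
      fun x => ∑ S, fourierCoef n g S * (f x * chi n S x) := by
    ext x
    rw [← sum_fourierCoef_mul_chi g x, mul_sum]
    exact sum_congr rfl fun S _ => by ring
  rw [hexpand, bExp_sum]
  exact sum_congr rfl fun S _ => by rw [bExp_const_mul, fourierCoef, fourierCoef, mul_comm]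

lemma fourierCoef_bP (t : ℝ) (f : (Fin n → Bool) → ℝ) (T : Finset (Fin n)) :
    fourierCoef n (bP n t f) T = Real.exp (-t * T.card) * fourierCoef n f T := by
  simp only [fourierCoef, bP, sum_mul, mul_assoc, bExp_sum, bExp_const_mul, bExp_chi_mul_chi]
  simp

lemma bVar_eq_sum_erase_empty (f : (Fin n → Bool) → ℝ) :
    bVar n f = ∑ S ∈ univ.erase ∅, fourierCoef n f S ^ 2 := by
  have hmean : fourierCoef n f ∅ = bExp n f := by simp [fourierCoef, chi]
  have hsq : ∑ S, fourierCoef n f S ^ 2 = bExp n (fun x => f x * f x) := by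
    simp only [sq, bExp_mul_eq_sum_fourierCoef_mul]
  rw [sum_erase_eq_sub (mem_univ _), hmean, hsq, bVar, bCov]
  simp only [sub_mul, mul_sub, bExp_sub, bExp_const, mul_comm _ (bExp n f), bExp_const_mul]
  ring

lemma bVar_bP (t : ℝ) (f : (Fin n → Bool) → ℝ) :
    bVar n (bP n t f) = ∑ S ∈ univ.erase ∅, Real.exp (-t * #S) ^ 2 * fourierCoef n f S ^ 2 := by
  simp only [bVar_eq_sum_erase_empty, fourierCoef_bP, mul_pow]

end Fourier

section Covariance

variable {n : ℕ}

lemma bCov_eq_bExp (g h : (Fin n → Bool) → ℝ) :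
    bCov n g h = bExp n (fun x => (g x - bExp n g) * h x) := by
  have hcenter : bExp n (fun x => g x - bExp n g) = 0 := by rw [bExp_sub, bExp_const, sub_self]
  have hsplit : (fun x => (g x - bExp n g) * (h x - bExp n h)) =
      fun x => (g x - bExp n g) * h x - bExp n h * (g x - bExp n g) := by
    ext x
    ring
  rw [bCov, hsplit, bExp_sub, bExp_const_mul, hcenter, mul_zero, sub_zero]

lemma bCov_sub_right (g h₁ h₂ : (Fin n → Bool) → ℝ) :
    bCov n g (fun x => h₁ x - h₂ x) = bCov n g h₁ - bCov n g h₂ := by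
  simp only [bCov_eq_bExp, mul_sub, bExp_sub]

lemma bCov_const_mul_right (g h : (Fin n → Bool) → ℝ) (c : ℝ) :
    bCov n g (fun x => c * h x) = c * bCov n g h := by
  simp only [bCov_eq_bExp, mul_left_comm _ c, bExp_const_mul]

lemma bCov_const_right (g : (Fin n → Bool) → ℝ) (c : ℝ) : bCov n g (fun _ => c) = 0 := by
  simp [bCov, bExp_const]

lemma bCov_sum_right {ι : Type*} (g : (Fin n → Bool) → ℝ) (s : Finset ι)
    (H : ι → (Fin n → Bool) → ℝ) :
    bCov n g (fun x => ∑ k ∈ s, H k x) = ∑ k ∈ s, bCov n g (H k) := by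
  simp only [bCov_eq_bExp, mul_sum, bExp_sum]

lemma abs_bCov_le {g : (Fin n → Bool) → ℝ} (hg : ∀ x, g x ∈ Set.Icc (0 : ℝ) 1)
    (h : (Fin n → Bool) → ℝ) : |bCov n g h| ≤ bExp n (fun x => |h x|) := by
  have hmean : bExp n g ∈ Set.Icc (0 : ℝ) 1 := by
    constructor
    · simpa [bExp_const] using bExp_mono (n := n) fun x => (hg x).1
    · simpa [bExp_const] using bExp_mono (n := n) fun x => (hg x).2
  rw [bCov_eq_bExp]
  refine (abs_bExp_le _).trans (bExp_mono fun x => ?_)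
  rw [abs_mul]
  have : |g x - bExp n g| ≤ 1 := abs_sub_le_of_nonneg_of_le (hg x).1 (hg x).2 hmean.1 hmean.2
  exact mul_le_of_le_one_left (abs_nonneg _) this

lemma bCov_bval_right (g : (Fin n → Bool) → ℝ) (i : Fin n) :
    bCov n g (fun x => bval (x i)) = fourierCoef n g {i} := by
  have hmean : bExp n (fun x => bval (x i)) = 0 := by
    simpa [chi_singleton, chi] using bExp_chi_mul_chi (n := n) {i} ∅
  simp only [bCov_eq_bExp, sub_mul, bExp_sub, bExp_const_mul, hmean, mul_zero, sub_zero,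
    fourierCoef, chi_singleton]

end Covariance

noncomputable def stair (N : ℕ) (v : ℝ) : ℝ :=
  4 / N * ∑ k ∈ range N, (if 4 * (k + 1) / N - 2 ≤ v then 1 else 0) - 2

lemma card_filter_range_add_one_le (N : ℕ) (a : ℝ) :
    #{k ∈ range N | ((k : ℕ) : ℝ) + 1 ≤ a} = min N ⌊a⌋₊ := by
  rw [← card_range (min N ⌊a⌋₊)]
  congr 1
  ext k
  have hfloor := Nat.le_floor_iff' (a := a) (Nat.succ_ne_zero k)
  push_cast at hfloor
  simp only [mem_filter, mem_range, lt_min_iff, ← hfloor, Nat.succ_le_iff]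

lemma stair_eq {N : ℕ} (hN : 0 < N) (v : ℝ) :
    stair N v = 4 / N * (min N ⌊N * (v + 2) / 4⌋₊ : ℕ) - 2 := by
  have hthreshold : ∀ k : ℕ, 4 * (k + 1) / N - 2 ≤ v ↔ (k + 1 : ℝ) ≤ N * (v + 2) / 4 := by
    intro k
    rw [sub_le_iff_le_add, div_le_iff₀ (by positivity), le_div_iff₀ (by positivity)]
    constructor <;> intro h <;> linarith
  simp only [stair, hthreshold, sum_boole, card_filter_range_add_one_le]

lemma abs_sub_stair_le {N : ℕ} (hN : 0 < N) (v : ℝ) : |v - stair N v| ≤ v ^ 2 / 2 + 4 / N := by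
  have hN' : (0 : ℝ) < N := Nat.cast_pos.mpr hN
  have h4N : 0 ≤ 4 / (N : ℝ) := by positivity
  rw [stair_eq hN]
  set a := N * (v + 2) / 4 with ha
  rcases lt_or_ge v (-2) with hv | hv
  · have : min N ⌊a⌋₊ = 0 := by simp [Nat.floor_eq_zero.mpr (by rw [ha]; nlinarith : a < 1)]
    rw [this, Nat.cast_zero, mul_zero, abs_le]
    constructor <;> nlinarith
  rcases le_or_gt 2 v with hv' | hv'
  · have : min N ⌊a⌋₊ = N := min_eq_left (Nat.le_floor (by rw [ha]; nlinarith))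
    rw [this, div_mul_cancel₀ _ hN'.ne', abs_le]
    constructor <;> nlinarith
  · have ha0 : 0 ≤ a := by rw [ha]; nlinarith
    have haN : a < N := by rw [ha]; nlinarith
    have : min N ⌊a⌋₊ = ⌊a⌋₊ := min_eq_right (Nat.cast_le.mp ((Nat.floor_le ha0).trans haN.le))
    have hdiff : v - (4 / N * ⌊a⌋₊ - 2) = 4 / N * (a - ⌊a⌋₊) := by
      rw [ha]
      field_simp
      ring
    have hfrac : a - ⌊a⌋₊ ≤ 1 := by linarith [Nat.lt_floor_add_one a]
    rw [this, hdiff, abs_of_nonneg (mul_nonneg h4N (by linarith [Nat.floor_le ha0]))]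
    calc 4 / N * (a - ⌊a⌋₊) ≤ 4 / N * 1 := by gcongr
      _ ≤ v ^ 2 / 2 + 4 / N := by nlinarith [sq_nonneg v]

section HalfSpace

variable {n : ℕ}

lemma bCov_indicator_le_Mb (g : (Fin n → Bool) → ℝ) {A : Set (Fin n → Bool)}
    (hA : IsHalfspaceB A) : bCov n g (A.indicator 1) ≤ Mb n g :=
  le_ciSup (f := fun A : {A : Set (Fin n → Bool) // IsHalfspaceB A} => bCov n g (A.1.indicator 1))
    (Set.finite_range _).bddAbove ⟨A, hA⟩

lemma bCov_threshold_le_Mb (g : (Fin n → Bool) → ℝ) (a : Fin n → ℝ) (τ : ℝ) :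
    bCov n g (fun x => if τ ≤ ∑ i, a i * bval (x i) then 1 else 0) ≤ Mb n g := by
  have hA : IsHalfspaceB {x : Fin n → Bool | τ ≤ ∑ i, a i * bval (x i)} :=
    ⟨-a, -τ, by ext x; simp [sum_neg_distrib]⟩
  convert bCov_indicator_le_Mb g hA using 2
  ext x
  simp [Set.indicator_apply]

lemma bCov_stair_le_Mb (g : (Fin n → Bool) → ℝ) (a : Fin n → ℝ) {N : ℕ} (hN : 0 < N) :
    bCov n g (fun x => stair N (∑ i, a i * bval (x i))) ≤ 4 * Mb n g := by
  simp only [stair]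
  rw [bCov_sub_right, bCov_const_right, sub_zero, bCov_const_mul_right, bCov_sum_right]
  calc 4 / (N : ℝ) * ∑ k ∈ range N,
        bCov n g (fun x => if 4 * (k + 1) / N - 2 ≤ ∑ i, a i * bval (x i) then 1 else 0)
      ≤ 4 / N * ∑ k ∈ range N, Mb n g := by
        gcongr with k
        exact bCov_threshold_le_Mb g a _
    _ = 4 * Mb n g := by
        rw [sum_const, card_range, nsmul_eq_mul]
        field_simp

end HalfSpace

section FirstLevel

variable {n : ℕ}

lemma bCov_sum_mul_bval (g : (Fin n → Bool) → ℝ) (a : Fin n → ℝ) :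
    bCov n g (fun x => ∑ i, a i * bval (x i)) = ∑ i, a i * fourierCoef n g {i} := by
  simp only [bCov_sum_right, bCov_const_mul_right, bCov_bval_right]

lemma bExp_sum_mul_bval_sq (a : Fin n → ℝ) :
    bExp n (fun x => (∑ i, a i * bval (x i)) ^ 2) = ∑ i, a i ^ 2 := by
  have hexpand : ∀ x, (∑ i, a i * bval (x i)) ^ 2 =
      ∑ i, ∑ j, a i * a j * (chi n {i} x * chi n {j} x) := by
    intro x
    simp only [sq, sum_mul_sum, chi_singleton, mul_mul_mul_comm]
  simp only [hexpand, bExp_sum, bExp_const_mul, bExp_chi_mul_chi, singleton_inj, mul_ite,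
    mul_one, mul_zero, sum_ite_eq, mem_univ, if_true, sq]

lemma w1b_le_eight_mul_Mb {g : (Fin n → Bool) → ℝ} (hg : ∀ x, g x ∈ Set.Icc (0 : ℝ) 1) :
    w1b n g ≤ 8 * Mb n g := by
  set L : (Fin n → Bool) → ℝ := fun x => ∑ i, fourierCoef n g {i} * bval (x i)
  have hcov : bCov n g L = w1b n g := by simp only [L, bCov_sum_mul_bval, w1b, sq]
  have hsq : bExp n (fun x => L x ^ 2) = w1b n g := bExp_sum_mul_bval_sq _
  have hstep : ∀ N : ℕ, 0 < N → w1b n g / 2 ≤ 4 * Mb n g + 4 / N := by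
    intro N hN
    have herr : bCov n g (fun x => L x - stair N (L x)) ≤ w1b n g / 2 + 4 / N :=
      calc _ ≤ |bCov n g (fun x => L x - stair N (L x))| := le_abs_self _
        _ ≤ bExp n (fun x => |L x - stair N (L x)|) := abs_bCov_le hg _
        _ ≤ bExp n (fun x => 1 / 2 * L x ^ 2 + 4 / N) :=
          bExp_mono fun x => by linarith [abs_sub_stair_le hN (L x)]
        _ = w1b n g / 2 + 4 / N := by rw [bExp_add, bExp_const_mul, bExp_const, hsq]; ring
    rw [bCov_sub_right, hcov] at herr
    linarith [bCov_stair_le_Mb g (fun i => fourierCoef n g {i}) hN]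
  have hlim : Tendsto (fun N : ℕ => 4 * Mb n g + 4 / (N : ℝ)) atTop (𝓝 (4 * Mb n g)) := by
    simpa using tendsto_const_nhds.add (tendsto_const_div_atTop_nhds_zero_nat (4 : ℝ))
  linarith [ge_of_tendsto hlim (eventually_atTop.2 ⟨1, hstep⟩)]

end FirstLevel

section Restriction

variable {n : ℕ}

lemma restExp_sum {ι : Type*} (s : ℝ) (u : Finset ι) (F : ι → (Fin n → Option Bool) → ℝ) :
    restExp n s (fun z => ∑ k ∈ u, F k z) = ∑ k ∈ u, restExp n s (F k) := by
  simp only [restExp, mul_sum]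
  rw [sum_comm]

lemma restExp_const_mul (s c : ℝ) (F : (Fin n → Option Bool) → ℝ) :
    restExp n s (fun z => c * F z) = c * restExp n s F := by
  simp only [restExp, mul_sum, mul_left_comm]

lemma restExp_mono {s : ℝ} (hs : 0 ≤ s) {F G : (Fin n → Option Bool) → ℝ}
    (h : ∀ z, F z ≤ G z) : restExp n s F ≤ restExp n s G := by
  have hρ : Real.exp (-s) ≤ 1 := Real.exp_le_one_iff.mpr (neg_nonpos.mpr hs)
  refine sum_le_sum fun z _ => mul_le_mul_of_nonneg_left (h z) (prod_nonneg fun i _ => ?_)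
  split_ifs
  · positivity
  · linarith

lemma restExp_prod (s : ℝ) (u : Fin n → Option Bool → ℝ) :
    restExp n s (fun z => ∏ j, u j (z j)) =
      ∏ j, (Real.exp (-s) * u j none +
        (1 - Real.exp (-s)) / 2 * (u j (some true) + u j (some false))) := by
  simp only [restExp, muWeight, ← prod_mul_distrib]
  rw [← Fintype.prod_sum fun j o =>
    (if o = none then Real.exp (-s) else (1 - Real.exp (-s)) / 2) * u j o]
  simp [Fintype.sum_option, mul_add]

/-- The factor at coordinate `j` of `E_x[χ_S(z ⊘ x) x_i]` when `z j = o`. -/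
noncomputable def restrictFactor (S : Finset (Fin n)) (i j : Fin n) (o : Option Bool) : ℝ :=
  if j = i then (if j ∈ S ∧ o = none then 1 else 0)
  else if j ∈ S then o.elim 0 bval else 1

lemma fourierCoef_restrictF_singleton (f : (Fin n → Bool) → ℝ) (z : Fin n → Option Bool)
    (i : Fin n) :
    fourierCoef n (restrictF f z) {i} =
      ∑ S : Finset (Fin n), fourierCoef n f S * ∏ j, restrictFactor S i j (z j) := by
  have hexpand : ∀ x, restrictF f z x * chi n {i} x =
      ∑ S : Finset (Fin n), fourierCoef n f S *
        ∏ j, (if j ∈ S then bval ((z j).getD (x j)) else 1) *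
          (if j = i then bval (x j) else 1) := by
    intro x
    rw [restrictF, ← sum_fourierCoef_mul_chi f (oslash z x), sum_mul]
    refine sum_congr rfl fun S _ => ?_
    rw [prod_mul_distrib, Fintype.prod_ite_mem, Fintype.prod_ite_eq', chi_singleton, chi,
      mul_assoc]
    rfl
  have hcoord : ∀ S j (o : Option Bool),
      ((if j ∈ S then bval (o.getD true) else 1) * (if j = i then bval true else 1) +
        (if j ∈ S then bval (o.getD false) else 1) * (if j = i then bval false else 1)) / 2 =
      restrictFactor S i j o := by
    intro S j o
    by_cases hji : j = i
    · subst hji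
      by_cases hjS : j ∈ S <;> rcases o with _ | _ | _ <;>
        norm_num [restrictFactor, hjS, bval, Option.some_ne_none]
    · by_cases hjS : j ∈ S <;> rcases o with _ | _ | _ <;>
        norm_num [restrictFactor, hji, hjS, bval]
  simp only [fourierCoef, hexpand, bExp_sum, bExp_const_mul]
  refine sum_congr rfl fun S _ => ?_
  rw [bExp_prod fun j b =>
    (if j ∈ S then bval ((z j).getD b) else 1) * (if j = i then bval b else 1)]
  simp only [hcoord]

lemma average_restrictFactor_mul (ρ : ℝ) (S T : Finset (Fin n)) (i j : Fin n) :
    ρ * (restrictFactor S i j none * restrictFactor T i j none) +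
      (1 - ρ) / 2 * (restrictFactor S i j (some true) * restrictFactor T i j (some true) +
        restrictFactor S i j (some false) * restrictFactor T i j (some false)) =
    if (j ∈ S ↔ j ∈ T) then
      (if j = i then (if j ∈ S then ρ else 0) else if j ∈ S then 1 - ρ else 1)
    else 0 := by
  by_cases hji : j = i
  · subst hji
    by_cases hjS : j ∈ S <;> by_cases hjT : j ∈ T <;> simp [restrictFactor, hjS, hjT]
  · by_cases hjS : j ∈ S <;> by_cases hjT : j ∈ T <;>
      simp [restrictFactor, hji, hjS, hjT, bval] <;> ring

lemma prod_ite_ite_eq_ite_mem (ρ : ℝ) (S : Finset (Fin n)) (i : Fin n) :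
    ∏ j, (if j = i then (if j ∈ S then ρ else 0) else if j ∈ S then 1 - ρ else 1) =
      if i ∈ S then ρ * (1 - ρ) ^ (#S - 1) else 0 := by
  rw [← mul_prod_erase univ _ (mem_univ i), if_pos rfl,
    prod_congr rfl fun j hj => if_neg (ne_of_mem_erase hj), prod_ite_mem, prod_const]
  have : univ.erase i ∩ S = S.erase i := by ext j; simp
  split_ifs with hiS
  · rw [this, card_erase_of_mem hiS]
  · rw [zero_mul]

lemma restExp_fourierCoef_restrictF_singleton_sq (s : ℝ) (f : (Fin n → Bool) → ℝ) (i : Fin n) :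
    restExp n s (fun z => fourierCoef n (restrictF f z) {i} ^ 2) =
      ∑ S : Finset (Fin n), fourierCoef n f S ^ 2 *
        (if i ∈ S then Real.exp (-s) * (1 - Real.exp (-s)) ^ (#S - 1) else 0) := by
  have hpair : ∀ S T : Finset (Fin n),
      restExp n s (fun z => ∏ j, restrictFactor S i j (z j) * restrictFactor T i j (z j)) =
        if S = T then (if i ∈ S then Real.exp (-s) * (1 - Real.exp (-s)) ^ (#S - 1) else 0)
        else 0 := by
    intro S T
    rw [restExp_prod s fun j o => restrictFactor S i j o * restrictFactor T i j o]
    simp only [average_restrictFactor_mul, Fintype.prod_ite_zero, prod_ite_ite_eq_ite_mem]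
    exact if_congr Finset.ext_iff.symm rfl rfl
  simp only [fourierCoef_restrictF_singleton, sq, sum_mul_sum, mul_mul_mul_comm _ (∏ j, _),
    ← prod_mul_distrib, restExp_sum, restExp_const_mul, hpair, mul_ite, mul_zero, sum_ite_eq,
    mem_univ, if_true]

lemma restExp_w1b (s : ℝ) (f : (Fin n → Bool) → ℝ) :
    restExp n s (fun z => w1b n (restrictF f z)) =
      ∑ S : Finset (Fin n), fourierCoef n f S ^ 2 *
        (#S * (Real.exp (-s) * (1 - Real.exp (-s)) ^ (#S - 1))) := by
  simp only [w1b, restExp_sum, restExp_fourierCoef_restrictF_singleton_sq]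
  rw [sum_comm]
  refine sum_congr rfl fun S _ => ?_
  rw [← mul_sum, Fintype.sum_ite_mem, sum_const, nsmul_eq_mul]

end Restriction

lemma exp_two_mul_sub_one_mul_exp_sq_le {t : ℝ} (ht : 0 < t) {k : ℕ} (hk : 1 ≤ k) :
    (Real.exp (2 * t) - 1) * Real.exp (-t * k) ^ 2 ≤
      2 * k * ((1 - Real.exp (-t)) * Real.exp (-t) ^ (k - 1)) := by
  set u := Real.exp (-t)
  set w := u ^ (k - 1)
  have hu0 : 0 < u := Real.exp_pos _
  have hu1 : u < 1 := Real.exp_lt_one_iff.mpr (neg_lt_zero.mpr ht)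
  have hw0 : 0 ≤ w := by positivity
  have hw1 : w ≤ 1 := pow_le_one₀ hu0.le hu1.le
  have hexp : Real.exp (-t * k) = u * w := by
    rw [mul_comm, Real.exp_nat_mul, ← pow_succ', Nat.sub_add_cancel hk]
  have hinv : Real.exp (2 * t) * u ^ 2 = 1 := by
    rw [← Real.exp_nat_mul, ← Real.exp_add]
    norm_num
  have hk' : (1 : ℝ) ≤ k := by exact_mod_cast hk
  calc (Real.exp (2 * t) - 1) * Real.exp (-t * k) ^ 2 = (1 - u) * w * ((1 + u) * w) := by
        rw [hexp]
        linear_combination w ^ 2 * hinv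
    _ ≤ (1 - u) * w * (2 * k) := by
        gcongr
        · nlinarith
        · nlinarith
    _ = 2 * k * ((1 - u) * w) := by ring

theorem stmt10 : ∃ c : ℝ, 0 < c ∧ ∀ (n : ℕ) (f : (Fin n → Bool) → ℝ) (t : ℝ),
    (∀ x, f x ∈ Set.Icc (0:ℝ) 1) → 0 < t →
    restExp n (-Real.log (1 - Real.exp (-t))) (fun z => Mb n (restrictF f z)) ≥
      c * (Real.exp (2*t) - 1) * bVar n (bP n t f) := by
  refine ⟨1 / 16, by norm_num, fun n f t hf ht => ?_⟩
  set s := -Real.log (1 - Real.exp (-t))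
  have hu1 : Real.exp (-t) < 1 := Real.exp_lt_one_iff.mpr (neg_lt_zero.mpr ht)
  have hρ : Real.exp (-s) = 1 - Real.exp (-t) := by
    rw [neg_neg, Real.exp_log (sub_pos.mpr hu1)]
  have hs : 0 ≤ s :=
    neg_nonneg.mpr (Real.log_nonpos (by linarith) (by linarith [Real.exp_pos (-t)]))
  have hw1 : restExp n s (fun z => w1b n (restrictF f z)) =
      ∑ S ∈ univ.erase ∅, fourierCoef n f S ^ 2 *
        (#S * ((1 - Real.exp (-t)) * Real.exp (-t) ^ (#S - 1))) := by
    rw [restExp_w1b, hρ, sub_sub_cancel, sum_erase _ (by simp)]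
  rw [ge_iff_le]
  calc 1 / 16 * (Real.exp (2 * t) - 1) * bVar n (bP n t f)
      = 1 / 8 * ∑ S ∈ univ.erase ∅, fourierCoef n f S ^ 2 *
          ((Real.exp (2 * t) - 1) * Real.exp (-t * #S) ^ 2 / 2) := by
        rw [bVar_bP, mul_sum, mul_sum]
        exact sum_congr rfl fun S _ => by ring
    _ ≤ 1 / 8 * restExp n s (fun z => w1b n (restrictF f z)) := by
        rw [hw1]
        gcongr with S hS
        have hk : 1 ≤ #S := card_pos.mpr (nonempty_of_ne_empty (ne_of_mem_erase hS))
        linarith [exp_two_mul_sub_one_mul_exp_sq_le ht hk]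
    _ = restExp n s (fun z => 1 / 8 * w1b n (restrictF f z)) := (restExp_const_mul _ _ _).symm
    _ ≤ restExp n s (fun z => Mb n (restrictF f z)) :=
        restExp_mono hs fun z => by
          linarith [w1b_le_eight_mul_Mb (g := restrictF f z) fun x => hf _]
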